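/- arXiv:2408.17305 — 6 statements merged into one kernel-verified Lean document; each statement's English description precedes it below -/
import Mathlib

section
/- Let p be a prime, n a positive integer, R an F_p-algebra and λ ∈ R. The map sending T to (U-1)/λ-type substitution, namely the R-algebra homomorphism R[U]/(U^{p^n}-1) → R[T]/(T^{p^n}) given by U ↦ 1+λT, is a Hopf algebra homomorphism (where U is group-like and Δ(T) = T⊗1+1⊗T+λT⊗T); moreover, if λ is invertible in R, this map is an isomorphism of Hopf algebras. -/
/-!
In characteristic `p`, `(1 + λT)^(p^n) = 1 + λ^(p^n) T^(p^n) = 1` in `R[T]/(T^(p^n))` and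
`(U - 1)^(p^n) = U^(p^n) - 1 = 0` in `R[U]/(U^(p^n) - 1)`. Hence `U ↦ 1 + λT` is well defined,
and for a unit `λ` the map `T ↦ λ⁻¹(U - 1)` is its inverse. That `1 + λT` is group-like is a
direct expansion in the tensor square.
-/

open Polynomial TensorProduct

section QuotientSpanSingleton

variable {R A : Type*} [CommRing R] [CommRing A] [Algebra R A]

noncomputable def Polynomial.quotientSpanLift (f : R[X]) (a : A) (ha : aeval a f = 0) :
    R[X] ⧸ Ideal.span {f} →ₐ[R] A :=
  Ideal.Quotient.liftₐ _ (aeval a) fun g hg => by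
    obtain ⟨b, rfl⟩ := Ideal.mem_span_singleton'.1 hg
    rw [map_mul, ha, mul_zero]

@[simp]
theorem Polynomial.quotientSpanLift_mk_X (f : R[X]) (a : A) (ha : aeval a f = 0) :
    quotientSpanLift f a ha (Ideal.Quotient.mk _ X) = a :=
  aeval_X a

theorem Polynomial.quotientSpan_algHom_ext {f : R[X]} {φ ψ : R[X] ⧸ Ideal.span {f} →ₐ[R] A}
    (h : φ (Ideal.Quotient.mk _ X) = ψ (Ideal.Quotient.mk _ X)) : φ = ψ :=
  Ideal.Quotient.algHom_ext R (Polynomial.algHom_ext h)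

end QuotientSpanSingleton

theorem one_add_algebraMap_mul_tmul_self {R A : Type*} [CommRing R] [CommRing A] [Algebra R A]
    (lam : R) (t : A) :
    (1 + algebraMap R A lam * t) ⊗ₜ[R] (1 + algebraMap R A lam * t)
      = (1 : A ⊗[R] A) + lam • (t ⊗ₜ[R] 1 + 1 ⊗ₜ[R] t + lam • (t ⊗ₜ[R] t)) := by
  simp only [← Algebra.smul_def, Algebra.TensorProduct.one_def, tmul_add, add_tmul, smul_tmul',
    tmul_smul, smul_add, smul_smul]
  abel

-- `A` may be the zero ring, so `CharP A p` is not available.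
theorem Algebra.add_pow_char_pow (R : Type*) {A : Type*} [CommRing R] [CommRing A] [Algebra R A]
    (p : ℕ) [Fact p.Prime] [CharP R p] (x y : A) (n : ℕ) :
    (x + y) ^ p ^ n = x ^ p ^ n + y ^ p ^ n := by
  obtain ⟨r, hr⟩ := exists_add_pow_prime_pow_eq (Fact.out : p.Prime) x y n
  rw [hr, ← map_natCast (algebraMap R A), CharP.cast_eq_zero, map_zero, zero_mul, zero_mul,
    zero_mul, add_zero]

noncomputable abbrev CyclicGroupRing (R : Type*) [CommRing R] (N : ℕ) :=
  R[X] ⧸ Ideal.span {(X : R[X]) ^ N - 1}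

noncomputable abbrev TruncatedPolynomial (R : Type*) [CommRing R] (N : ℕ) :=
  R[X] ⧸ Ideal.span {(X : R[X]) ^ N}

namespace CyclicGroupRing

variable {R : Type*} [CommRing R] {N : ℕ}

noncomputable abbrev gen : CyclicGroupRing R N := Ideal.Quotient.mk _ X

theorem gen_pow : (gen : CyclicGroupRing R N) ^ N = 1 := by
  rw [← sub_eq_zero, ← map_pow, ← map_one (Ideal.Quotient.mk _), ← map_sub,
    Ideal.Quotient.eq_zero_iff_mem]
  exact Ideal.subset_span rfl

end CyclicGroupRing

namespace TruncatedPolynomial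

variable {R : Type*} [CommRing R] {N : ℕ}

noncomputable abbrev var : TruncatedPolynomial R N := Ideal.Quotient.mk _ X

theorem var_pow : (var : TruncatedPolynomial R N) ^ N = 0 := by
  rw [← map_pow, Ideal.Quotient.eq_zero_iff_mem]
  exact Ideal.subset_span rfl

end TruncatedPolynomial

open CyclicGroupRing TruncatedPolynomial

section CharP

variable {R : Type*} [CommRing R] (p : ℕ) [Fact p.Prime] [CharP R p] (n : ℕ)

noncomputable def cyclicToTruncated (lam : R) :
    CyclicGroupRing R (p ^ n) →ₐ[R] TruncatedPolynomial R (p ^ n) :=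
  quotientSpanLift _ (1 + algebraMap R _ lam * var) <| by
    rw [map_sub, map_pow, aeval_X, map_one, Algebra.add_pow_char_pow R, one_pow, mul_pow, var_pow,
      mul_zero, add_zero, sub_self]

noncomputable def truncatedToCyclic (w : R) :
    TruncatedPolynomial R (p ^ n) →ₐ[R] CyclicGroupRing R (p ^ n) :=
  quotientSpanLift _ (algebraMap R _ w * (gen - 1)) <| by
    have h := Algebra.add_pow_char_pow R p (gen - 1 : CyclicGroupRing R (p ^ n)) 1 n
    rw [sub_add_cancel, gen_pow, one_pow, right_eq_add] at h
    rw [map_pow, aeval_X, mul_pow, h, mul_zero]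

variable {p n}

@[simp]
theorem cyclicToTruncated_gen (lam : R) :
    cyclicToTruncated p n lam gen = 1 + algebraMap R _ lam * var :=
  quotientSpanLift_mk_X _ _ _

@[simp]
theorem truncatedToCyclic_var (w : R) :
    truncatedToCyclic p n w var = algebraMap R _ w * (gen - 1) :=
  quotientSpanLift_mk_X _ _ _

theorem truncatedToCyclic_comp_cyclicToTruncated {lam w : R} (h : w * lam = 1) :
    (truncatedToCyclic p n w).comp (cyclicToTruncated p n lam) = AlgHom.id R _ := by
  apply quotientSpan_algHom_ext
  rw [AlgHom.comp_apply, cyclicToTruncated_gen, map_add, map_one, map_mul, AlgHom.commutes,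
    truncatedToCyclic_var, ← mul_assoc, ← map_mul, mul_comm lam, h, map_one, one_mul,
    add_sub_cancel, AlgHom.id_apply]

theorem cyclicToTruncated_comp_truncatedToCyclic {lam w : R} (h : w * lam = 1) :
    (cyclicToTruncated p n lam).comp (truncatedToCyclic p n w) = AlgHom.id R _ := by
  apply quotientSpan_algHom_ext
  rw [AlgHom.comp_apply, truncatedToCyclic_var, map_mul, map_sub, map_one, AlgHom.commutes,
    cyclicToTruncated_gen, add_sub_cancel_left, ← mul_assoc, ← map_mul, h, map_one, one_mul,
    AlgHom.id_apply]

theorem cyclicToTruncated_bijective {lam : R} (hlam : IsUnit lam) :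
    Function.Bijective (cyclicToTruncated p n lam) := by
  obtain ⟨w, hw⟩ : ∃ w, w * lam = 1 := hlam.exists_left_inv
  exact (AlgEquiv.ofAlgHom _ _ (cyclicToTruncated_comp_truncatedToCyclic hw)
    (truncatedToCyclic_comp_cyclicToTruncated hw)).bijective

end CharP

theorem stmt2_general (p : ℕ) [Fact p.Prime] (n : ℕ)
    (R : Type*) [CommRing R] [CharP R p] (lam : R) :
    let AU := Polynomial R ⧸ Ideal.span {(X : Polynomial R) ^ (p ^ n) - 1}
    let AT := Polynomial R ⧸ Ideal.span {(X : Polynomial R) ^ (p ^ n)}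
    let u : AU := Ideal.Quotient.mk _ X
    let t : AT := Ideal.Quotient.mk _ X
    (∃! φ : AU →ₐ[R] AT, φ u = 1 + algebraMap R AT lam * t) ∧
    -- group-likeness of `1+λT` under `Δ(T) = T⊗1+1⊗T+λT⊗T`:
    ((1 : AT ⊗[R] AT) + lam • (t ⊗ₜ[R] 1 + 1 ⊗ₜ[R] t + lam • (t ⊗ₜ[R] t))
        = (1 + algebraMap R AT lam * t) ⊗ₜ[R] (1 + algebraMap R AT lam * t)) ∧
    (IsUnit lam → ∀ φ : AU →ₐ[R] AT, φ u = 1 + algebraMap R AT lam * t →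
        Function.Bijective φ) := by
  intro AU AT u t
  have unique (φ : AU →ₐ[R] AT) (hφ : φ u = 1 + algebraMap R AT lam * t) :
      φ = cyclicToTruncated p n lam :=
    quotientSpan_algHom_ext (hφ.trans (cyclicToTruncated_gen lam).symm)
  refine ⟨⟨cyclicToTruncated p n lam, cyclicToTruncated_gen lam, unique⟩,
    (one_add_algebraMap_mul_tmul_self lam t).symm, fun hlam φ hφ => ?_⟩
  rw [unique φ hφ]
  exact cyclicToTruncated_bijective hlam

/-- The map `U ↦ 1 + λT` gives a well-defined (unique) `R`-algebra homomorphism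
`R[U]/(U^{p^n}-1) → R[T]/(T^{p^n})`; it is compatible with the Hopf structures:
`U` is group-like and indeed `Δ(1+λT) = (1+λT) ⊗ (1+λT)` for the comultiplication
`Δ(T) = T⊗1 + 1⊗T + λT⊗T`; moreover if `λ` is invertible it is an isomorphism. -/
theorem stmt2 (p : ℕ) [Fact p.Prime] (n : ℕ) (hn : 0 < n)
    (R : Type*) [CommRing R] [CharP R p] (lam : R) :
    let AU := Polynomial R ⧸ Ideal.span {(X : Polynomial R) ^ (p ^ n) - 1}
    let AT := Polynomial R ⧸ Ideal.span {(X : Polynomial R) ^ (p ^ n)}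
    let u : AU := Ideal.Quotient.mk _ X
    let t : AT := Ideal.Quotient.mk _ X
    (∃! φ : AU →ₐ[R] AT, φ u = 1 + algebraMap R AT lam * t) ∧
    -- group-likeness of `1+λT` under `Δ(T) = T⊗1+1⊗T+λT⊗T`:
    ((1 : AT ⊗[R] AT) + lam • (t ⊗ₜ[R] 1 + 1 ⊗ₜ[R] t + lam • (t ⊗ₜ[R] t))
        = (1 + algebraMap R AT lam * t) ⊗ₜ[R] (1 + algebraMap R AT lam * t)) ∧
    (IsUnit lam → ∀ φ : AU →ₐ[R] AT, φ u = 1 + algebraMap R AT lam * t →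
        Function.Bijective φ) :=
  stmt2_general p n R lam
end

section
/- Let p be a prime, n a positive integer, R an F_p-algebra and λ ∈ R, and let B be a commutative R-algebra. An R-linear map f: R[T]/(T^{p^n}) → B, written as the tuple (a_0, ..., a_{p^n-1}) with a_s = f(T^s), is invertible for the convolution product if and only if a_0 · ∏_{r=1}^{p^n-1} (∑_{k=0}^{r} C(r,k) λ^k a_k) is invertible in B. -/
/-!
The value of a functional `f` at `(1 + λT)^r` is `∑_{k ≤ r} C(r,k) λ^k a_k`. Since
`Δ(1 + λT) = (1 + λT) ⊗ (1 + λT)`, these elements are grouplike, so evaluation at them is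
multiplicative for the convolution product: an inverse of `f` forces every diagonal entry to be
a unit. Conversely, the equations `f * g = ε` form a triangular system in the values of `g`
whose diagonal entries are exactly these values, so it can be solved by forward substitution.
-/

open Finset Polynomial

section

variable {B : Type*} [CommRing B]

theorem sum_choose_mul_sum_choose_mul (u v : ℕ) (c : ℕ → B) :
    ∑ i ∈ range (u + 1), (u.choose i : B) * ∑ k ∈ range (v + 1), (v.choose k : B) * c (i + k)
      = ∑ m ∈ range (u + v + 1), ((u + v).choose m : B) * c m := by
  -- both sides are `φ ((X + 1) ^ (u + v))`
  let φ : B[X] →ₗ[B] B := lsum fun m => LinearMap.smulRight LinearMap.id (c m)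
  have hφ : ∀ m, φ (X ^ m) = c m := fun m => by
    simp [φ, ← monomial_one_right_eq_X_pow, sum_monomial_index]
  have h1 : ∀ w, (X + 1 : B[X]) ^ w = ∑ m ∈ range (w + 1), (w.choose m : B) • X ^ m := by
    intro w; rw [add_pow]; simp [Nat.cast_smul_eq_nsmul, nsmul_eq_mul, mul_comm]
  have hφ1 : ∀ w, φ ((X + 1) ^ w) = ∑ m ∈ range (w + 1), (w.choose m : B) * c m := by
    intro w; simp [h1, map_sum, hφ]
  rw [← hφ1, pow_add, h1, h1, sum_mul, map_sum]
  refine sum_congr rfl fun i _ => ?_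
  simp only [smul_mul_smul_comm, mul_sum, map_sum, map_smul, ← pow_add, hφ, smul_eq_mul]
  exact sum_congr rfl fun k _ => by ring

variable (lam : B) (a b : ℕ → B)

def lamConvCoeff (s l : ℕ) : B :=
  s.choose l * ∑ k ∈ range (l + 1), (l.choose k : B) * lam ^ k * a (k + s - l)

def lamConv (s : ℕ) : B :=
  ∑ l ∈ range (s + 1), lamConvCoeff lam a s l * b l

-- the functional `a` evaluated at `(1 + λT) ^ r`
def grouplikeValue (r : ℕ) : B :=
  ∑ k ∈ range (r + 1), (r.choose k : B) * lam ^ k * a k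

theorem lamConvCoeff_self (s : ℕ) : lamConvCoeff lam a s s = grouplikeValue lam a s := by
  simp [lamConvCoeff, grouplikeValue]

theorem lamConv_eq_sum_add (s : ℕ) :
    lamConv lam a b s
      = ∑ l ∈ range s, lamConvCoeff lam a s l * b l + grouplikeValue lam a s * b s := by
  rw [lamConv, sum_range_succ, lamConvCoeff_self]

theorem grouplikeValue_zero : grouplikeValue lam a 0 = a 0 := by
  simp [grouplikeValue]

theorem grouplikeValue_congr {a' : ℕ → B} (r : ℕ) (h : ∀ k ≤ r, a k = a' k) :
    grouplikeValue lam a r = grouplikeValue lam a' r :=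
  sum_congr rfl fun k hk => by rw [h k (mem_range_succ_iff.1 hk)]

theorem grouplikeValue_ite_eq_zero (r : ℕ) :
    grouplikeValue lam (fun s => if s = 0 then 1 else 0) r = 1 := by
  simp [grouplikeValue]

theorem pow_mul_lamConvCoeff_add_left (l i : ℕ) :
    lam ^ i * lamConvCoeff lam a (l + i) l = ((l + i).choose l : B) *
      ∑ k ∈ range (l + 1), (l.choose k : B) * (lam ^ (i + k) * a (i + k)) := by
  rw [lamConvCoeff, mul_left_comm, mul_sum]
  refine congrArg _ <| sum_congr rfl fun k _ => ?_
  rw [show k + (l + i) - l = i + k by omega, pow_add]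
  ring

theorem grouplikeValue_lamConv (r : ℕ) :
    grouplikeValue lam (lamConv lam a b) r
      = grouplikeValue lam a r * grouplikeValue lam b r := by
  calc grouplikeValue lam (lamConv lam a b) r
      = ∑ l ∈ range (r + 1), ∑ i ∈ range (r - l + 1),
          (r.choose (l + i) : B) * lam ^ (l + i) * (lamConvCoeff lam a (l + i) l * b l) := by
        simp only [grouplikeValue, lamConv, mul_sum]
        conv_lhs => simp only [range_eq_Ico]
        rw [← sum_Ico_Ico_comm, ← range_eq_Ico]
        refine sum_congr rfl fun l hl => ?_
        rw [sum_Ico_eq_sum_range, Nat.succ_sub (mem_range_succ_iff.1 hl)]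
    _ = ∑ l ∈ range (r + 1), (r.choose l : B) * lam ^ l * b l *
          ∑ i ∈ range (r - l + 1), ((r - l).choose i : B) *
            ∑ k ∈ range (l + 1), (l.choose k : B) * (lam ^ (i + k) * a (i + k)) := by
        refine sum_congr rfl fun l _ => ?_
        rw [mul_sum]
        refine sum_congr rfl fun i _ => ?_
        have hc := congrArg (Nat.cast : ℕ → B) (Nat.choose_mul (n := r) (Nat.le_add_right l i))
        rw [Nat.add_sub_cancel_left, Nat.cast_mul, Nat.cast_mul] at hc
        calc (r.choose (l + i) : B) * lam ^ (l + i) * (lamConvCoeff lam a (l + i) l * b l)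
            = r.choose (l + i) * lam ^ l * b l * (lam ^ i * lamConvCoeff lam a (l + i) l) := by
              ring
          _ = _ := by
              rw [pow_mul_lamConvCoeff_add_left]
              linear_combination (lam ^ l * b l * ∑ k ∈ range (l + 1),
                (l.choose k : B) * (lam ^ (i + k) * a (i + k))) * hc
    _ = grouplikeValue lam a r * grouplikeValue lam b r := by
        rw [mul_comm, grouplikeValue, sum_mul]
        refine sum_congr rfl fun l hl => ?_
        rw [sum_choose_mul_sum_choose_mul (r - l) l fun m => lam ^ m * a m,
          Nat.sub_add_cancel (mem_range_succ_iff.1 hl)]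
        simp only [grouplikeValue, mul_assoc]

-- Forward substitution in `lamConv lam a b = ε`; since `Ring.inverse` is `0` at non-units, it
-- solves the system only up to the first index whose diagonal entry is not a unit.
noncomputable def lamConvInv : ℕ → B
  | s => Ring.inverse (grouplikeValue lam a s) *
      ((if s = 0 then 1 else 0) - ∑ l : Fin s, lamConvCoeff lam a s l * lamConvInv l)

theorem lamConv_lamConvInv (s : ℕ) (h : IsUnit (grouplikeValue lam a s)) :
    lamConv lam a (lamConvInv lam a) s = if s = 0 then 1 else 0 := by
  rw [lamConv_eq_sum_add, lamConvInv, Ring.mul_inverse_cancel_left _ _ h,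
    Fin.sum_univ_eq_sum_range (fun l => lamConvCoeff lam a s l * lamConvInv lam a l)]
  ring

theorem exists_lamConv_eq_ite_iff (N : ℕ) :
    (∃ b, ∀ s < N, lamConv lam a b s = if s = 0 then 1 else 0) ↔
      ∀ r < N, IsUnit (grouplikeValue lam a r) := by
  constructor
  · rintro ⟨b, hb⟩ r hr
    refine IsUnit.of_mul_eq_one (grouplikeValue lam b r) ?_
    rw [← grouplikeValue_lamConv, grouplikeValue_congr lam _ r fun s hs => hb s (by omega),
      grouplikeValue_ite_eq_zero]
  · exact fun h => ⟨lamConvInv lam a, fun s hs => lamConv_lamConvInv lam a s (h s hs)⟩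

end

theorem stmt7_general (p : ℕ) [Fact p.Prime] (n : ℕ)
    (R : Type*) [CommRing R] (lam : R)
    (B : Type*) [CommRing B] [Algebra R B] (a : ℕ → B) :
    (∃ b : ℕ → B, ∀ s < p ^ n,
        (∑ l ∈ Finset.range (s + 1), (s.choose l : B) *
          (∑ k ∈ Finset.range (l + 1),
            (l.choose k : B) * algebraMap R B lam ^ k * a (k + s - l)) * b l)
          = if s = 0 then 1 else 0) ↔
      IsUnit (a 0 * ∏ r ∈ Finset.Icc 1 (p ^ n - 1),
        ∑ k ∈ Finset.range (r + 1),
          (r.choose k : B) * algebraMap R B lam ^ k * a k) := by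
  have hN : 0 < p ^ n := pow_pos (Fact.out : p.Prime).pos n
  refine (exists_lamConv_eq_ite_iff (algebraMap R B lam) a (p ^ n)).trans ?_
  rw [IsUnit.mul_iff, IsUnit.prod_iff, ← grouplikeValue_zero (algebraMap R B lam) a]
  constructor
  · exact fun h => ⟨h 0 hN, fun r hr => h r (by simp at hr; omega)⟩
  · rintro ⟨h0, h⟩ r hr
    rcases Nat.eq_zero_or_pos r with rfl | hr0
    exacts [h0, h r (mem_Icc.2 ⟨hr0, by omega⟩)]

/-- Convolution invertibility criterion for `R[T]/(T^{p^n})` with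
`Δ(T) = T⊗1 + 1⊗T + λT⊗T`: an `R`-linear map to a commutative `R`-algebra `B`, given by
the tuple `(a_0,…,a_{p^n-1})` of its values on `1, T, …, T^{p^n-1}`, is invertible for the
convolution product (which, by the comultiplication formula
`Δ(T^s) = ∑_{l≤s} C(s,l)(∑_{k≤l} C(l,k) λ^k T^{k+s-l}) ⊗ T^l`, sends `(a,b)` to
`s ↦ ∑_{l≤s} C(s,l)(∑_{k≤l} C(l,k) λ^k a_{k+s-l}) b_l`, with convolution unit
`ε = (1,0,…,0)`) iff `a_0 · ∏_{r=1}^{p^n-1} (∑_{k=0}^{r} C(r,k) λ^k a_k)` is a unit. -/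
theorem stmt7 (p : ℕ) [Fact p.Prime] (n : ℕ) (hn : 0 < n)
    (R : Type*) [CommRing R] [CharP R p] (lam : R)
    (B : Type*) [CommRing B] [Algebra R B] (a : ℕ → B) :
    (∃ b : ℕ → B, ∀ s < p ^ n,
        (∑ l ∈ Finset.range (s + 1), (s.choose l : B) *
          (∑ k ∈ Finset.range (l + 1),
            (l.choose k : B) * algebraMap R B lam ^ k * a (k + s - l)) * b l)
          = if s = 0 then 1 else 0) ↔
      IsUnit (a 0 * ∏ r ∈ Finset.Icc 1 (p ^ n - 1),
        ∑ k ∈ Finset.range (r + 1),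
          (r.choose k : B) * algebraMap R B lam ^ k * a k) :=
  stmt7_general p n R lam B a
end

section
/- Let p be a prime, n a positive integer, and R an F_p-algebra. Consider the Laurent polynomial algebra S = R[Y_1^{±1}, Y_U^{±1}, ..., Y_{U^{p^n-1}}^{±1}], made a right comodule algebra over H = R[U]/(U^{p^n}-1) (with U group-like) by ρ(Y_{U^s}) = Y_{U^s} ⊗ U^s. Then the subalgebra of coinvariants S^{coH} equals R[Y_1^{±1}, (Y_U^2/Y_{U^2})^{±1}, ..., (Y_U^{p^n-1}/Y_{U^{p^n-1}})^{±1}, (Y_U^{p^n})^{±1}]. -/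
open AddMonoidAlgebra

/-!
A monomial `∏ Y_{U^s}^{m_s}` is sent by `ρ` to itself tensored with `U^{∑ s m_s}`, so the
coinvariants are spanned by the monomials whose exponent lies in the kernel of the degree map
`ℤ^N → ℤ/N`, `m ↦ ∑ s m_s`. The algebra generated by the monomials with exponents in a
symmetric set `V` is spanned by those with exponents in the subgroup generated by `V`, so it
remains to see that the claimed exponents generate that kernel. This follows from
`m = ∑ₛ m_s (e_s - s e_1) + (∑ₛ s m_s) e_1`, in which `∑ₛ s m_s` is a multiple of `N` on the
kernel, while `e_s - s e_1` is `e_0`, `0` or a generator according as `s = 0`, `s = 1` or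
`s ≥ 2`.
-/

namespace AddMonoidAlgebra

variable {R M : Type*} [CommSemiring R]

theorem closure_image_single_one [AddMonoid M] (s : Set M) :
    (Submonoid.closure ((fun m => single m (1 : R)) '' s) : Set R[M]) =
      (fun m => single m (1 : R)) '' AddSubmonoid.closure s := by
  have h := MonoidHom.map_mclosure (of R M) (Multiplicative.toAdd ⁻¹' s)
  rw [← AddSubmonoid.toSubmonoid_closure] at h
  exact congrArg SetLike.coe h.symm

theorem adjoin_image_single_one [AddMonoid M] (s : Set M) :
    Subalgebra.toSubmodule (Algebra.adjoin R ((fun m => single m (1 : R)) '' s)) =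
      supported R R (AddSubmonoid.closure s) := by
  rw [Algebra.adjoin_eq_span, supported_eq_span_single, closure_image_single_one]

theorem mem_adjoin_image_single_one_iff [AddGroup M] {s : Set M} (hs : -s ⊆ s) (x : R[M]) :
    x ∈ Algebra.adjoin R ((fun m => single m (1 : R)) '' s) ↔
      (x.coeff.support : Set M) ⊆ AddSubgroup.closure s := by
  rw [← Subalgebra.mem_toSubmodule, adjoin_image_single_one, mem_supported,
    ← AddSubgroup.coe_toAddSubmonoid, AddSubgroup.closure_toAddSubmonoid,
    Set.union_eq_self_of_subset_right hs]

end AddMonoidAlgebra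

theorem Pi.sum_smul_single_sub {ι : Type*} [Fintype ι] [DecidableEq ι] (w m : ι → ℤ) (j : ι) :
    ∑ s, m s • (Pi.single s 1 - w s • Pi.single j 1) =
      m - (∑ s, w s * m s) • Pi.single j 1 := by
  have hm : ∑ s, m s • Pi.single s (1 : ℤ) = m := by
    simpa only [← Pi.single_smul', smul_eq_mul, mul_one] using Finset.univ_sum_single m
  simp only [smul_sub, Finset.sum_sub_distrib, smul_smul, ← Finset.sum_smul, mul_comm (m _), hm]

section Degree

variable (N : ℕ)

/-- `ρ(∏ Y_{U^s}^{m_s}) = ∏ Y_{U^s}^{m_s} ⊗ U^{coactionDegree N m}`. -/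
def coactionDegree : (Fin N → ℤ) →+ ZMod N where
  toFun m := ∑ i : Fin N, ((i : ℕ) : ZMod N) * ((m i : ℤ) : ZMod N)
  map_zero' := by simp
  map_add' a b := by simp [mul_add, Finset.sum_add_distrib]

lemma coactionDegree_single (i : Fin N) (c : ℤ) :
    coactionDegree N (Pi.single i c) = (i : ℕ) * c := by
  simp [coactionDegree, Pi.single_apply, apply_ite (Int.cast : ℤ → ZMod N)]

lemma coactionDegree_eq_zero_iff (m : Fin N → ℤ) :
    coactionDegree N m = 0 ↔ (N : ℤ) ∣ ∑ s : Fin N, ((s : ℕ) : ℤ) * m s := by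
  rw [← ZMod.intCast_zmod_eq_zero_iff_dvd]
  simp [coactionDegree]

variable [NeZero N]

lemma ZMod.natCast_val_fin_one : (((1 : Fin N) : ℕ) : ZMod N) = 1 := by
  rw [Fin.val_one', ZMod.natCast_mod, Nat.cast_one]

/-- The exponents of `Y_1^{±1}`, `(Y_U^N)^{±1}` and `(Y_U^s / Y_{U^s})^{±1}`, `2 ≤ s < N`. -/
def coinvariantGeneratorExponents : Set (Fin N → ℤ) :=
  {Pi.single 0 1, -Pi.single 0 1, (N : ℤ) • Pi.single 1 1, -((N : ℤ) • Pi.single 1 1)} ∪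
    {v | ∃ s : Fin N, 2 ≤ (s : ℕ) ∧
      (v = (s : ℕ) • Pi.single 1 1 - Pi.single s 1 ∨
        v = Pi.single s 1 - (s : ℕ) • Pi.single 1 1)}

lemma neg_coinvariantGeneratorExponents_subset :
    -coinvariantGeneratorExponents N ⊆ coinvariantGeneratorExponents N := by
  rintro v (hv | ⟨s, hs, hv | hv⟩)
  · simp only [Set.mem_insert_iff, Set.mem_singleton_iff, neg_eq_iff_eq_neg, neg_neg] at hv
    left
    aesop
  · exact Or.inr ⟨s, hs, Or.inr (by rw [← neg_neg v, hv, neg_sub])⟩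
  · exact Or.inr ⟨s, hs, Or.inl (by rw [← neg_neg v, hv, neg_sub])⟩

lemma coinvariantGeneratorExponents_subset_ker :
    coinvariantGeneratorExponents N ⊆ (coactionDegree N).ker := by
  intro v hv
  rw [SetLike.mem_coe, AddMonoidHom.mem_ker]
  rcases hv with hv | ⟨s, -, rfl | rfl⟩
  · simp only [Set.mem_insert_iff, Set.mem_singleton_iff] at hv
    rcases hv with rfl | rfl | rfl | rfl <;>
      simp only [map_neg, map_zsmul, coactionDegree_single] <;> simp
  all_goals
    simp only [map_sub, map_nsmul, coactionDegree_single, ZMod.natCast_val_fin_one]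
    simp

lemma single_sub_nsmul_single_mem_closure (s : Fin N) :
    Pi.single s 1 - (s : ℕ) • Pi.single 1 1 ∈
      AddSubgroup.closure (coinvariantGeneratorExponents N) := by
  obtain hs | hs | hs : (s : ℕ) = 0 ∨ (s : ℕ) = 1 ∨ 2 ≤ (s : ℕ) := by omega
  · obtain rfl : s = 0 := Fin.ext hs
    rw [hs, zero_smul, sub_zero]
    exact AddSubgroup.subset_closure (Or.inl (Set.mem_insert _ _))
  · obtain rfl : s = 1 := Fin.ext (by rw [hs, Fin.val_one', Nat.mod_eq_of_lt (hs ▸ s.isLt)])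
    rw [hs, one_smul, sub_self]
    exact zero_mem _
  · exact AddSubgroup.subset_closure (Or.inr ⟨s, hs, Or.inr rfl⟩)

lemma ker_coactionDegree_le_closure :
    (coactionDegree N).ker ≤ AddSubgroup.closure (coinvariantGeneratorExponents N) := by
  intro m hm
  obtain ⟨k, hk⟩ := (coactionDegree_eq_zero_iff N m).1 hm
  have hdecomp : m = ∑ s, m s • (Pi.single s 1 - ((s : ℕ) : ℤ) • Pi.single 1 1) +
      k • (N : ℤ) • Pi.single (1 : Fin N) 1 := by
    rw [Pi.sum_smul_single_sub, hk, smul_smul, mul_comm, sub_add_cancel]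
  rw [hdecomp]
  refine add_mem (sum_mem fun s _ => zsmul_mem ?_ _) (zsmul_mem ?_ k)
  · rw [natCast_zsmul]
    exact single_sub_nsmul_single_mem_closure N s
  · exact AddSubgroup.subset_closure (Or.inl (by simp))

theorem closure_coinvariantGeneratorExponents :
    AddSubgroup.closure (coinvariantGeneratorExponents N) = (coactionDegree N).ker :=
  le_antisymm ((AddSubgroup.closure_le _).2 (coinvariantGeneratorExponents_subset_ker N))
    (ker_coactionDegree_le_closure N)

end Degree

theorem stmt8_general (p : ℕ) [Fact p.Prime] (n : ℕ)
    (R : Type*) [CommRing R] :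
    let N := p ^ n
    let S := AddMonoidAlgebra R (Fin N → ℤ)
    let e : Fin N → (Fin N → ℤ) := fun i => Pi.single i 1
    -- exponent vectors of the claimed generators and their inverses
    let V : Set (Fin N → ℤ) :=
      {e 0, -e 0, (N : ℤ) • e 1, -((N : ℤ) • e 1)} ∪
        {v | ∃ s : Fin N, 2 ≤ (s : ℕ) ∧
          (v = (s : ℕ) • e 1 - e s ∨ v = e s - (s : ℕ) • e 1)}
    let gens : Set S := {x | ∃ v ∈ V, x = AddMonoidAlgebra.single v (1 : R)}
    ∀ x : S, x ∈ Algebra.adjoin R gens ↔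
      ∀ m ∈ x.coeff.support, (∑ i : Fin N, ((i : ℕ) : ZMod (p ^ n)) * ((m i : ℤ) : ZMod (p ^ n)))
        = 0 := by
  intro N S e V gens x
  have hgens : gens = (fun m => single m (1 : R)) '' coinvariantGeneratorExponents N :=
    Set.ext fun _ => exists_congr fun _ => and_congr_right fun _ => eq_comm
  rw [hgens, mem_adjoin_image_single_one_iff (neg_coinvariantGeneratorExponents_subset N),
    closure_coinvariantGeneratorExponents]
  rfl

/-- Coinvariants of the Laurent polynomial algebra
`S = R[Y_1^{±1}, Y_U^{±1}, …, Y_{U^{p^n-1}}^{±1}]` (realized as the group algebra of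
`ℤ^{p^n}`, the variable `Y_{U^s}` corresponding to the `s`-th standard exponent vector)
under the `H = R[U]/(U^{p^n}-1)`-coaction `ρ(Y_{U^s}) = Y_{U^s} ⊗ U^s`: since `U^j` run
through a basis of `H`, an element is coinvariant iff every monomial `∏ Y_{U^s}^{m_s}` in
its support has degree `∑ s·m_s ≡ 0 (mod p^n)`.  The claim is that the coinvariant
subalgebra equals
`R[Y_1^{±1}, (Y_U^2/Y_{U^2})^{±1}, …, (Y_U^{p^n-1}/Y_{U^{p^n-1}})^{±1}, (Y_U^{p^n})^{±1}]`. -/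
theorem stmt8 (p : ℕ) [Fact p.Prime] (n : ℕ) (hn : 0 < n)
    (R : Type*) [CommRing R] [CharP R p] :
    let N := p ^ n
    let S := AddMonoidAlgebra R (Fin N → ℤ)
    let e : Fin N → (Fin N → ℤ) := fun i => Pi.single i 1
    -- exponent vectors of the claimed generators and their inverses
    let V : Set (Fin N → ℤ) :=
      {e 0, -e 0, (N : ℤ) • e 1, -((N : ℤ) • e 1)} ∪
        {v | ∃ s : Fin N, 2 ≤ (s : ℕ) ∧
          (v = (s : ℕ) • e 1 - e s ∨ v = e s - (s : ℕ) • e 1)}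
    let gens : Set S := {x | ∃ v ∈ V, x = AddMonoidAlgebra.single v (1 : R)}
    ∀ x : S, x ∈ Algebra.adjoin R gens ↔
      ∀ m ∈ x.coeff.support, (∑ i : Fin N, ((i : ℕ) : ZMod (p ^ n)) * ((m i : ℤ) : ZMod (p ^ n)))
        = 0 :=
  stmt8_general p n R
end

section
/- Let p be a prime, R a commutative F_p-algebra, λ, a ∈ R, and C = R[X, 1/(a+λX)]. Suppose a is invertible in R/(λ). Then the R-algebra homomorphism r: C ⊗_R C → C ⊗_R R[T, 1/(1+λT)] determined by X⊗1 ↦ X⊗1 and 1⊗X ↦ λX⊗T + X⊗1 + a⊗T is an isomorphism, with inverse determined by X⊗1 ↦ X⊗1 and 1⊗T ↦ (1⊗X - X⊗1)/((a+λX)⊗1). -/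
open Polynomial TensorProduct

/-!
Both maps are built from the universal property of the localisations, sending generators to
generators. `r` is well defined because it sends `a + λ(1⊗X)` to the unit
`(a+λX)⊗(1+λT)`; the inverse is well defined because, with `u = (1⊗X - X⊗1)/((a+λX)⊗1)`,
one has `(1 + λu)·((a+λX)⊗1) = 1⊗(a+λX)`, again a unit. Each composite fixes the generators
`X⊗1` and `1⊗X` (resp. `1⊗T`), hence is the identity.
-/

namespace Localization.Away

variable {R : Type*} [CommRing R] {D : Type*} [CommRing D] [Algebra R D]

theorem algHom_ext_of_X {g : R[X]} {f₁ f₂ : Localization.Away g →ₐ[R] D}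
    (h : f₁ (algebraMap R[X] _ X) = f₂ (algebraMap R[X] _ X)) : f₁ = f₂ :=
  AlgHom.coe_ringHom_injective <| IsLocalization.ringHom_ext (Submonoid.powers g) <|
    congrArg AlgHom.toRingHom <| Polynomial.algHom_ext
      (f := f₁.comp (IsScalarTower.toAlgHom R R[X] _))
      (g := f₂.comp (IsScalarTower.toAlgHom R R[X] _)) h

theorem tensor_algHom_ext {g h : R[X]}
    {f₁ f₂ : Localization.Away g ⊗[R] Localization.Away h →ₐ[R] D}
    (hl : f₁ (algebraMap R[X] _ X ⊗ₜ[R] 1) = f₂ (algebraMap R[X] _ X ⊗ₜ[R] 1))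
    (hr : f₁ (1 ⊗ₜ[R] algebraMap R[X] _ X) = f₂ (1 ⊗ₜ[R] algebraMap R[X] _ X)) : f₁ = f₂ :=
  Algebra.TensorProduct.ext (algHom_ext_of_X hl) (algHom_ext_of_X hr)

theorem algebraMap_C (g : R[X]) (r : R) :
    algebraMap R[X] (Localization.Away g) (C r) = algebraMap R _ r := by
  rw [IsScalarTower.algebraMap_apply R R[X], Polynomial.algebraMap_eq]

noncomputable def liftX (g : R[X]) (y : D) (hy : IsUnit (aeval y g)) :
    Localization.Away g →ₐ[R] D :=
  IsLocalization.Away.liftAlgHom g (f := aeval y) hy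

@[simp] theorem liftX_algebraMap_X (g : R[X]) (y : D) (hy : IsUnit (aeval y g)) :
    liftX g y hy (algebraMap R[X] _ X) = y := by
  simp [liftX]

variable {S : Type*} [CommRing S] [Algebra R S]

noncomputable def lTensorLiftX (h : R[X]) (y : S ⊗[R] D) (hy : IsUnit (aeval y h)) :
    S ⊗[R] Localization.Away h →ₐ[R] S ⊗[R] D :=
  Algebra.TensorProduct.lift Algebra.TensorProduct.includeLeft (liftX h y hy)
    fun _ _ => Commute.all _ _

@[simp] theorem lTensorLiftX_tmul (h : R[X]) (y : S ⊗[R] D) (hy : IsUnit (aeval y h))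
    (s : S) (q : Localization.Away h) :
    lTensorLiftX h y hy (s ⊗ₜ[R] q) = (s ⊗ₜ[R] 1) * liftX h y hy q := by
  simp [lTensorLiftX]

end Localization.Away

/-- Rewriting with this turns identities between pure tensors into identities in a commutative
ring, which `ring` can close. -/
theorem Algebra.TensorProduct.tmul_eq_includeLeft_mul_includeRight {R A B : Type*} [CommRing R]
    [CommRing A] [Algebra R A] [CommRing B] [Algebra R B] (c : A) (d : B) :
    c ⊗ₜ[R] d = (includeLeft : A →ₐ[R] A ⊗[R] B) c * includeRight d := by
  simp

namespace TensorSquareAway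

open Localization.Away Algebra.TensorProduct

variable {R : Type*} [CommRing R] (lam a : R)

noncomputable abbrev ringC := Localization.Away (Polynomial.C a + Polynomial.C lam * (X : R[X]))
noncomputable abbrev ringB := Localization.Away (1 + Polynomial.C lam * (X : R[X]))
noncomputable abbrev ringC.x : ringC lam a := algebraMap R[X] _ X
noncomputable abbrev ringB.t : ringB lam := algebraMap R[X] _ X

local notation "𝒞" => ringC lam a
local notation "ℬ" => ringB lam
local notation "𝔵" => ringC.x lam a
local notation "𝔱" => ringB.t lam

noncomputable abbrev ringC.denom : ringC lam a :=
  algebraMap R _ a + algebraMap R _ lam * ringC.x lam a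

local notation "𝔡" => ringC.denom lam a

theorem isUnit_denom : IsUnit 𝔡 := by
  have := IsLocalization.Away.algebraMap_isUnit (S := 𝒞) (Polynomial.C a + Polynomial.C lam * X)
  rwa [map_add, map_mul, algebraMap_C, algebraMap_C] at this

theorem isUnit_denom_tmul_one (E : Type*) [CommRing E] [Algebra R E] :
    IsUnit (𝔡 ⊗ₜ[R] (1 : E)) :=
  (isUnit_denom lam a).map (includeLeft : 𝒞 →ₐ[R] 𝒞 ⊗[R] E)

theorem isUnit_one_add_lam_mul_t : IsUnit (1 + algebraMap R ℬ lam * 𝔱) := by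
  have := IsLocalization.Away.algebraMap_isUnit (S := ℬ) (1 + Polynomial.C lam * X)
  rwa [map_add, map_one, map_mul, algebraMap_C] at this

noncomputable def fwdImage : 𝒞 ⊗[R] ℬ :=
  (algebraMap R 𝒞 lam * 𝔵) ⊗ₜ[R] 𝔱 + 𝔵 ⊗ₜ[R] 1 + algebraMap R 𝒞 a ⊗ₜ[R] 𝔱

theorem aeval_fwdImage :
    aeval (fwdImage lam a) (Polynomial.C a + Polynomial.C lam * X) =
      (𝔡 ⊗ₜ[R] 1) * (1 ⊗ₜ[R] (1 + algebraMap R ℬ lam * 𝔱)) := by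
  simp only [fwdImage, map_add, map_mul, map_one, aeval_C, aeval_X,
    tmul_eq_includeLeft_mul_includeRight, AlgHom.commutes]
  ring

noncomputable def fwd : 𝒞 ⊗[R] 𝒞 →ₐ[R] 𝒞 ⊗[R] ℬ :=
  lTensorLiftX _ (fwdImage lam a) <| by
    rw [aeval_fwdImage]
    exact (isUnit_denom_tmul_one lam a ℬ).mul
      ((isUnit_one_add_lam_mul_t lam).map (includeRight : ℬ →ₐ[R] 𝒞 ⊗[R] ℬ))

noncomputable def bwdImage : 𝒞 ⊗[R] 𝒞 :=
  (1 ⊗ₜ[R] 𝔵 - 𝔵 ⊗ₜ[R] 1) * Ring.inverse (𝔡 ⊗ₜ[R] (1 : 𝒞))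

theorem bwdImage_mul_denom : bwdImage lam a * (𝔡 ⊗ₜ[R] 1) = 1 ⊗ₜ[R] 𝔵 - 𝔵 ⊗ₜ[R] 1 := by
  rw [bwdImage, mul_assoc, Ring.inverse_mul_cancel _ (isUnit_denom_tmul_one lam a 𝒞), mul_one]

theorem aeval_bwdImage_mul_denom :
    aeval (bwdImage lam a) (1 + Polynomial.C lam * X) * (𝔡 ⊗ₜ[R] 1) = 1 ⊗ₜ[R] 𝔡 := by
  simp only [map_add, map_one, map_mul, aeval_C, aeval_X]
  linear_combination (norm := skip) (algebraMap R (𝒞 ⊗[R] 𝒞) lam) * bwdImage_mul_denom lam a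
  simp only [ringC.denom, tmul_eq_includeLeft_mul_includeRight, map_add, map_mul, map_one,
    AlgHom.commutes]
  ring

noncomputable def bwd : 𝒞 ⊗[R] ℬ →ₐ[R] 𝒞 ⊗[R] 𝒞 :=
  lTensorLiftX _ (bwdImage lam a) <| isUnit_of_mul_isUnit_left <| by
    rw [aeval_bwdImage_mul_denom]
    exact (isUnit_denom lam a).map includeRight

@[simp] theorem fwd_tmul_one (c : 𝒞) : fwd lam a (c ⊗ₜ[R] 1) = c ⊗ₜ[R] 1 := by
  simp [fwd]

@[simp] theorem fwd_one_tmul_x : fwd lam a (1 ⊗ₜ[R] 𝔵) = fwdImage lam a := by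
  simp [fwd, ← one_def]

@[simp] theorem bwd_tmul_one (c : 𝒞) : bwd lam a (c ⊗ₜ[R] 1) = c ⊗ₜ[R] 1 := by
  simp [bwd]

@[simp] theorem bwd_one_tmul_t : bwd lam a (1 ⊗ₜ[R] 𝔱) = bwdImage lam a := by
  simp [bwd, ← one_def]

theorem bwd_fwdImage : bwd lam a (fwdImage lam a) = 1 ⊗ₜ[R] 𝔵 := by
  simp only [fwdImage, map_add, bwd, lTensorLiftX_tmul, liftX_algebraMap_X, map_one]
  linear_combination (norm := skip) bwdImage_mul_denom lam a
  simp only [ringC.denom, tmul_eq_includeLeft_mul_includeRight, map_add, map_mul, map_one,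
    AlgHom.commutes]
  ring

theorem fwd_bwdImage : fwd lam a (bwdImage lam a) = 1 ⊗ₜ[R] 𝔱 := by
  refine (isUnit_denom_tmul_one lam a ℬ).mul_right_cancel ?_
  calc fwd lam a (bwdImage lam a) * (𝔡 ⊗ₜ[R] 1)
        = fwd lam a (bwdImage lam a * (𝔡 ⊗ₜ[R] 1)) := by rw [map_mul, fwd_tmul_one]
    _ = fwdImage lam a - 𝔵 ⊗ₜ[R] 1 := by
        rw [bwdImage_mul_denom, map_sub, fwd_one_tmul_x, fwd_tmul_one]
    _ = 1 ⊗ₜ[R] 𝔱 * (𝔡 ⊗ₜ[R] 1) := by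
        simp only [fwdImage, ringC.denom, tmul_eq_includeLeft_mul_includeRight, map_add, map_mul,
          map_one, AlgHom.commutes]
        ring

noncomputable def tensorEquiv : 𝒞 ⊗[R] 𝒞 ≃ₐ[R] 𝒞 ⊗[R] ℬ :=
  AlgEquiv.ofAlgHom (fwd lam a) (bwd lam a)
    (tensor_algHom_ext (by simp) (by simp [fwd_bwdImage]))
    (tensor_algHom_ext (by simp) (by simp [bwd_fwdImage]))

theorem tensorEquiv_symm_apply (y : 𝒞 ⊗[R] ℬ) : (tensorEquiv lam a).symm y = bwd lam a y :=
  rfl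

end TensorSquareAway

theorem stmt12_general
    (R : Type*) [CommRing R] (lam a : R) :
    let C := Localization.Away (Polynomial.C a + Polynomial.C lam * (X : Polynomial R))
    let B := Localization.Away (1 + Polynomial.C lam * (X : Polynomial R))
    let x : C := algebraMap (Polynomial R) C X
    let t : B := algebraMap (Polynomial R) B X
    ∃ r : (C ⊗[R] C) ≃ₐ[R] (C ⊗[R] B),
      r (x ⊗ₜ[R] 1) = x ⊗ₜ[R] 1 ∧
      r (1 ⊗ₜ[R] x) = (algebraMap R C lam * x) ⊗ₜ[R] t + x ⊗ₜ[R] 1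
          + (algebraMap R C a) ⊗ₜ[R] t ∧
      r.symm (x ⊗ₜ[R] 1) = x ⊗ₜ[R] 1 ∧
      r.symm (1 ⊗ₜ[R] t) * ((algebraMap R C a + algebraMap R C lam * x) ⊗ₜ[R] 1)
          = 1 ⊗ₜ[R] x - x ⊗ₜ[R] 1 := by
  open TensorSquareAway in
  exact ⟨tensorEquiv lam a, fwd_tmul_one lam a _, fwd_one_tmul_x lam a, bwd_tmul_one lam a _, by
    rw [tensorEquiv_symm_apply, bwd_one_tmul_t, bwdImage_mul_denom]⟩

/-- For `C = R[X, 1/(a+λX)]` and `B = R[T, 1/(1+λT)]`, if `a` is invertible mod `λ`, the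
`R`-algebra map `r : C ⊗_R C → C ⊗_R B` with `X⊗1 ↦ X⊗1`,
`1⊗X ↦ λX⊗T + X⊗1 + a⊗T` is an isomorphism, whose inverse sends `X⊗1 ↦ X⊗1` and
`1⊗T ↦ (1⊗X - X⊗1)/((a+λX)⊗1)`. -/
theorem stmt12 (p : ℕ) [Fact p.Prime]
    (R : Type*) [CommRing R] [CharP R p] (lam a : R)
    (ha : IsUnit (Ideal.Quotient.mk (Ideal.span {lam}) a)) :
    let C := Localization.Away (Polynomial.C a + Polynomial.C lam * (X : Polynomial R))
    let B := Localization.Away (1 + Polynomial.C lam * (X : Polynomial R))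
    let x : C := algebraMap (Polynomial R) C X
    let t : B := algebraMap (Polynomial R) B X
    ∃ r : (C ⊗[R] C) ≃ₐ[R] (C ⊗[R] B),
      r (x ⊗ₜ[R] 1) = x ⊗ₜ[R] 1 ∧
      r (1 ⊗ₜ[R] x) = (algebraMap R C lam * x) ⊗ₜ[R] t + x ⊗ₜ[R] 1
          + (algebraMap R C a) ⊗ₜ[R] t ∧
      r.symm (x ⊗ₜ[R] 1) = x ⊗ₜ[R] 1 ∧
      r.symm (1 ⊗ₜ[R] t) * ((algebraMap R C a + algebraMap R C lam * x) ⊗ₜ[R] 1)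
          = 1 ⊗ₜ[R] x - x ⊗ₜ[R] 1 :=
  stmt12_general R lam a
end

section
/- Let p be a prime, R a commutative F_p-algebra, λ, a ∈ R with a invertible in R/(λ). Then C = R[X, 1/(a+λX)] is a faithfully flat R-algebra. -/
open Polynomial

/-!
`C` is flat over `R` as a localization of the free `R`-module `R[X]`, and `Spec C → Spec R` is
surjective: `a` and `λ` are coprime because `a` is a unit mod `λ`, so for a prime `p` of `R` the
prime `p[X]` of `R[X]` does not contain `a + λX`; it therefore comes from a prime of `C`, which
lies over `p`.
-/

theorem isCoprime_of_isUnit_quotient_mk_span_singleton {R : Type*} [CommRing R] {lam a : R}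
    (ha : IsUnit (Ideal.Quotient.mk (Ideal.span {lam}) a)) : IsCoprime a lam := by
  obtain ⟨b, hb⟩ := Ideal.Quotient.mk_surjective (↑ha.unit⁻¹ : R ⧸ Ideal.span {lam})
  have hba : Ideal.Quotient.mk (Ideal.span {lam}) (b * a - 1) = 0 := by
    rw [map_sub, map_mul, hb, map_one, IsUnit.val_inv_mul, sub_self]
  obtain ⟨c, hc⟩ := Ideal.mem_span_singleton'.mp (Ideal.Quotient.eq_zero_iff_mem.mp hba)
  exact ⟨b, -c, by linear_combination -hc⟩

theorem Ideal.comap_C_map_C {R : Type*} [CommRing R] (I : Ideal R) :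
    (I.map (C : R →+* R[X])).comap C = I := by
  ext r
  rw [Ideal.mem_comap, Ideal.mem_map_C_iff]
  exact ⟨fun h ↦ by simpa using h 0, fun h n ↦ by rw [coeff_C]; split_ifs <;> simp [h]⟩

theorem Polynomial.faithfullyFlat_localizationAway_of_span_coeff_eq_top {R : Type*} [CommRing R]
    {f : R[X]} (hf : Ideal.span (Set.range f.coeff) = ⊤) :
    Module.FaithfullyFlat R (Localization.Away f) := by
  refine .of_comap_surjective fun p ↦ ?_
  have hfp : f ∉ p.asIdeal.map C := by
    rw [Ideal.mem_map_C_iff]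
    intro h
    apply p.isPrime.ne_top
    rw [eq_top_iff, ← hf, Ideal.span_le]
    rintro _ ⟨n, rfl⟩
    exact h n
  obtain ⟨q, hq⟩ : (⟨_, Ideal.isPrime_map_C_of_isPrime⟩ : PrimeSpectrum R[X]) ∈
      Set.range (PrimeSpectrum.comap (algebraMap R[X] (Localization.Away f))) := by
    rw [PrimeSpectrum.localization_away_comap_range _ f]
    exact hfp
  refine ⟨q, PrimeSpectrum.ext ?_⟩
  rw [IsScalarTower.algebraMap_eq R R[X] (Localization.Away f), PrimeSpectrum.comap_comp,
    Function.comp_apply, hq]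
  exact Ideal.comap_C_map_C p.asIdeal

theorem Polynomial.span_coeff_C_add_C_mul_X_eq_top {R : Type*} [CommRing R] {a b : R}
    (hab : IsCoprime a b) : Ideal.span (Set.range (C a + C b * X).coeff) = ⊤ := by
  have ha : a ∈ Ideal.span (Set.range (C a + C b * X).coeff) := Ideal.subset_span ⟨0, by simp⟩
  have hb : b ∈ Ideal.span (Set.range (C a + C b * X).coeff) := Ideal.subset_span ⟨1, by simp⟩
  obtain ⟨u, v, huv⟩ := hab
  exact Ideal.eq_top_of_isUnit_mem _ (huv ▸ Ideal.add_mem _ (Ideal.mul_mem_left _ u ha)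
    (Ideal.mul_mem_left _ v hb)) isUnit_one

theorem stmt13_general
    (R : Type*) [CommRing R] (lam a : R)
    (ha : IsUnit (Ideal.Quotient.mk (Ideal.span {lam}) a)) :
    Module.FaithfullyFlat R
      (Localization.Away (Polynomial.C a + Polynomial.C lam * (X : Polynomial R))) :=
  faithfullyFlat_localizationAway_of_span_coeff_eq_top <|
    span_coeff_C_add_C_mul_X_eq_top <| isCoprime_of_isUnit_quotient_mk_span_singleton ha

/-- If `a` is invertible in `R/(λ)`, then `C = R[X, 1/(a+λX)]` is a faithfully flat
`R`-algebra. -/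
theorem stmt13 (p : ℕ) [Fact p.Prime]
    (R : Type*) [CommRing R] [CharP R p] (lam a : R)
    (ha : IsUnit (Ideal.Quotient.mk (Ideal.span {lam}) a)) :
    Module.FaithfullyFlat R
      (Localization.Away (Polynomial.C a + Polynomial.C lam * (X : Polynomial R))) :=
  stmt13_general R lam a ha
end

section
/- Let p be a prime, R a commutative F_p-algebra, λ, a, c ∈ R with a^p + λ^p c invertible in R, C̃ = R[X]/(X^p - c), and B̃ = R[T]/(T^p) the Hopf algebra with Δ(T) = T⊗1+1⊗T+λT⊗T. Give C̃ the right B̃-comodule algebra structure ρ(X) = X⊗1 + a⊗T + λX⊗T. Then the canonical map C̃ ⊗_R C̃ → C̃ ⊗_R B̃, determined by X⊗1 ↦ X⊗1 and 1⊗X ↦ X⊗1 + a⊗T + λX⊗T, is an isomorphism of R-algebras (so C̃ is a Γ^{(λ)}-torsor, as C̃ is free of rank p, hence faithfully flat over R). -/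
/-!
Over `A = C̃` the polynomial `Y ^ p - c` acquires the root `x`, and since the Frobenius is additive
in characteristic `p` it becomes `(Y - x) ^ p`. The element `u = a + λx` is a unit because
`u ^ p = a ^ p + λ ^ p c`, so the affine substitution `Y = x + u T` identifies
`A[Y]/(Y ^ p - c)` with `A[T]/(T ^ p)`. The Galois map is this `A`-algebra isomorphism
`A ⊗ C̃ ≃ A ⊗ B̃`, viewed over `R`.
-/

open Polynomial TensorProduct

theorem add_pow_char_of_algebra (R : Type*) {S : Type*} [CommRing R] [CommRing S] [Algebra R S]
    (p : ℕ) [Fact p.Prime] [CharP R p] (x y : S) : (x + y) ^ p = x ^ p + y ^ p := by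
  obtain ⟨r, hr⟩ := (Commute.all x y).exists_add_pow_prime_eq (Fact.out : p.Prime)
  rw [hr, ← map_natCast (algebraMap R S), CharP.cast_eq_zero, map_zero]
  ring

theorem sub_pow_char_of_algebra (R : Type*) {S : Type*} [CommRing R] [CommRing S] [Algebra R S]
    (p : ℕ) [Fact p.Prime] [CharP R p] (x y : S) : (x - y) ^ p = x ^ p - y ^ p :=
  eq_sub_of_add_eq <| by rw [← add_pow_char_of_algebra R, sub_add_cancel]

theorem isUnit_algebraMap_add_mul_of_pow_eq (R : Type*) {S : Type*} [CommRing R] [CommRing S]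
    [Algebra R S] (p : ℕ) [Fact p.Prime] [CharP R p] {a lam c : R} {y : S}
    (hy : y ^ p = algebraMap R S c) (h : IsUnit (a ^ p + lam ^ p * c)) :
    IsUnit (algebraMap R S a + algebraMap R S lam * y) := by
  refine (isUnit_pow_iff (Fact.out : p.Prime).ne_zero).mp ?_
  rw [add_pow_char_of_algebra R, mul_pow, hy, ← map_pow, ← map_pow, ← map_mul, ← map_add]
  exact h.map _

theorem AlgHom.map_tmul_eq_algebraMap_mul {R A B C : Type*} [CommRing R] [CommRing A]
    [CommRing B] [CommRing C] [Algebra R A] [Algebra R B] [Algebra A C]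
    (F : A ⊗[R] B →ₐ[A] C) (a : A) (b : B) : F (a ⊗ₜ b) = algebraMap A C a * F (1 ⊗ₜ b) := by
  rw [← F.commutes, Algebra.TensorProduct.algebraMap_apply, Algebra.algebraMap_self_apply,
    ← map_mul, Algebra.TensorProduct.tmul_mul_tmul, mul_one, one_mul]

namespace AdjoinRoot

variable {R A : Type*} [CommRing R] [CommRing A] [Algebra R A] {p : ℕ} {c : R}

theorem root_X_pow_sub_C_pow :
    root (X ^ p - C c) ^ p = algebraMap R (AdjoinRoot (X ^ p - C c)) c := by
  have h := mk_self (f := X ^ p - C c)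
  rwa [map_sub, map_pow, mk_X, mk_C, sub_eq_zero] at h

theorem root_X_pow_pow : root (X ^ p : R[X]) ^ p = 0 := by
  rw [← mk_X, ← map_pow, mk_self]

variable [Fact p.Prime] [CharP R p]

noncomputable def affineSubstHom {x : A} (u : A) (hx : x ^ p = algebraMap R A c) :
    A ⊗[R] AdjoinRoot (X ^ p - C c) →ₐ[A] A ⊗[R] AdjoinRoot (X ^ p : R[X]) :=
  Algebra.TensorProduct.lift (Algebra.ofId A _)
    (liftAlgHom _ (Algebra.ofId R _) (x ⊗ₜ 1 + u ⊗ₜ root _) (by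
      rw [Algebra.toRingHom_ofId, eval₂_sub, eval₂_X_pow, eval₂_C, add_pow_char_of_algebra R,
        Algebra.TensorProduct.tmul_pow, Algebra.TensorProduct.tmul_pow, root_X_pow_pow,
        tmul_zero, add_zero, one_pow, hx, Algebra.TensorProduct.algebraMap_apply, sub_self]))
    fun _ _ ↦ .all _ _

noncomputable def affineSubstInv (x : A) {u : A} (hu : IsUnit u) (hx : x ^ p = algebraMap R A c) :
    A ⊗[R] AdjoinRoot (X ^ p : R[X]) →ₐ[A] A ⊗[R] AdjoinRoot (X ^ p - C c) :=
  Algebra.TensorProduct.lift (Algebra.ofId A _)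
    (liftAlgHom _ (Algebra.ofId R _)
      ((1 ⊗ₜ root _ - x ⊗ₜ 1) * (((hu.unit⁻¹ : Aˣ) : A) ⊗ₜ 1)) (by
      rw [eval₂_X_pow, mul_pow, sub_pow_char_of_algebra R,
        Algebra.TensorProduct.tmul_pow, Algebra.TensorProduct.tmul_pow, root_X_pow_sub_C_pow,
        one_pow, one_pow, hx, ← Algebra.TensorProduct.algebraMap_apply,
        ← Algebra.TensorProduct.algebraMap_apply', sub_self, zero_mul]))
    fun _ _ ↦ .all _ _

variable {x u : A} (hu : IsUnit u) (hx : x ^ p = algebraMap R A c)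

theorem affineSubstHom_one_tmul_root :
    affineSubstHom u hx (1 ⊗ₜ root _) = x ⊗ₜ 1 + u ⊗ₜ root _ := by
  rw [affineSubstHom, Algebra.TensorProduct.lift_tmul, liftAlgHom_root, map_one, one_mul]

theorem affineSubstInv_one_tmul_root :
    affineSubstInv x hu hx (1 ⊗ₜ root _) =
      (1 ⊗ₜ root _ - x ⊗ₜ 1) * (((hu.unit⁻¹ : Aˣ) : A) ⊗ₜ 1) := by
  rw [affineSubstInv, Algebra.TensorProduct.lift_tmul, liftAlgHom_root, map_one, one_mul]

theorem affineSubstHom_comp_affineSubstInv :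
    (affineSubstHom u hx).comp (affineSubstInv x hu hx) = AlgHom.id A _ := by
  refine Algebra.TensorProduct.ext (Subsingleton.elim _ _) (algHom_ext ?_)
  show affineSubstHom u hx (affineSubstInv x hu hx (1 ⊗ₜ root _)) = 1 ⊗ₜ root _
  rw [affineSubstInv_one_tmul_root, map_mul, map_sub, affineSubstHom_one_tmul_root,
    AlgHom.map_tmul_eq_algebraMap_mul _ x,
    AlgHom.map_tmul_eq_algebraMap_mul _ (hu.unit⁻¹ : Aˣ).val, ← Algebra.TensorProduct.one_def,
    map_one]
  simp only [Algebra.TensorProduct.algebraMap_apply, Algebra.algebraMap_self_apply, mul_one,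
    add_sub_cancel_left, Algebra.TensorProduct.tmul_mul_tmul, IsUnit.mul_val_inv]

theorem affineSubstInv_comp_affineSubstHom :
    (affineSubstInv x hu hx).comp (affineSubstHom u hx) = AlgHom.id A _ := by
  refine Algebra.TensorProduct.ext (Subsingleton.elim _ _) (algHom_ext ?_)
  show affineSubstInv x hu hx (affineSubstHom u hx (1 ⊗ₜ root _)) = 1 ⊗ₜ root _
  rw [affineSubstHom_one_tmul_root, map_add, AlgHom.map_tmul_eq_algebraMap_mul _ x,
    AlgHom.map_tmul_eq_algebraMap_mul _ u, ← Algebra.TensorProduct.one_def, map_one,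
    affineSubstInv_one_tmul_root]
  have hinv : u ⊗ₜ[R] (1 : AdjoinRoot (X ^ p - C c)) * (hu.unit⁻¹ : Aˣ).val ⊗ₜ 1 = 1 := by
    rw [Algebra.TensorProduct.tmul_mul_tmul, IsUnit.mul_val_inv, mul_one,
      Algebra.TensorProduct.one_def]
  simp only [Algebra.TensorProduct.algebraMap_apply, Algebra.algebraMap_self_apply, mul_one]
  linear_combination (1 ⊗ₜ root _ - x ⊗ₜ[R] (1 : AdjoinRoot (X ^ p - C c))) * hinv

noncomputable def affineSubstEquiv :
    A ⊗[R] AdjoinRoot (X ^ p - C c) ≃ₐ[A] A ⊗[R] AdjoinRoot (X ^ p : R[X]) :=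
  .ofAlgHom (affineSubstHom u hx) (affineSubstInv x hu hx)
    (affineSubstHom_comp_affineSubstInv hu hx) (affineSubstInv_comp_affineSubstHom hu hx)

end AdjoinRoot

/-- For `C̃ = R[X]/(X^p - c)` with the `B̃ = R[T]/(T^p)`-coaction
`ρ(X) = X⊗1 + a⊗T + λX⊗T`, if `a^p + λ^p c` is a unit, the canonical (Galois) map
`C̃ ⊗_R C̃ → C̃ ⊗_R B̃` determined by `X⊗1 ↦ X⊗1`, `1⊗X ↦ X⊗1 + a⊗T + λX⊗T` is an
isomorphism of `R`-algebras (so `C̃` — free of rank `p`, hence faithfully flat — is a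
`Γ^{(λ)}`-torsor). -/
theorem stmt18 (p : ℕ) [Fact p.Prime]
    (R : Type*) [CommRing R] [CharP R p] (lam a c : R)
    (h : IsUnit (a ^ p + lam ^ p * c)) :
    let Ct := Polynomial R ⧸ Ideal.span {(X : Polynomial R) ^ p - Polynomial.C c}
    let Bt := Polynomial R ⧸ Ideal.span {(X : Polynomial R) ^ p}
    let x : Ct := Ideal.Quotient.mk _ X
    let t : Bt := Ideal.Quotient.mk _ X
    ∃ e : (Ct ⊗[R] Ct) ≃ₐ[R] (Ct ⊗[R] Bt),
      e (x ⊗ₜ[R] 1) = x ⊗ₜ[R] 1 ∧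
      e (1 ⊗ₜ[R] x) = x ⊗ₜ[R] 1 + (algebraMap R Ct a) ⊗ₜ[R] t
          + (algebraMap R Ct lam * x) ⊗ₜ[R] t := by
  intro Ct Bt x t
  -- `Ct` and `Bt` are `AdjoinRoot (X ^ p - C c)` and `AdjoinRoot (X ^ p)` by definition
  have hx : x ^ p = algebraMap R Ct c := AdjoinRoot.root_X_pow_sub_C_pow
  have hu := isUnit_algebraMap_add_mul_of_pow_eq R p hx h
  refine ⟨(AdjoinRoot.affineSubstEquiv hu hx).restrictScalars R, ?_, ?_⟩
  · exact (AdjoinRoot.affineSubstEquiv hu hx).commutes x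
  · exact (AdjoinRoot.affineSubstHom_one_tmul_root hx).trans (by rw [add_tmul, add_assoc]; rfl)
end
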